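/- Discrete chain rule for the discrete-gradient-dependent integrator: suppose V^n, V^{n+1} ∈ (ℝ³)^N satisfy the DGDI update. Then for every continuously differentiable F : (ℝ³)^N → ℝ, F(V^{n+1}) − F(V^n) = Δt · (1/2) Σ_{p,p̄} Γ̄(F,p,p̄)ᵀ W̄(p,p̄) Γ̄(S,p,p̄), where W̄(p,p̄) = ν w_p w_p̄ 𝟙(p,p̄) Q(Γ̄(K,p,p̄)). -/

import Mathlib

open Matrix
open scoped RealInnerProductSpace

/-- The Landau collision kernel `Q(ξ) = (1/‖ξ‖)(I − ξξᵀ/‖ξ‖²)` on ℝ³. -/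
noncomputable def landauQ (ξ : EuclideanSpace ℝ (Fin 3)) : Matrix (Fin 3) (Fin 3) ℝ :=
  ‖ξ‖⁻¹ • ((1 : Matrix (Fin 3) (Fin 3) ℝ) - (‖ξ‖ ^ 2)⁻¹ • Matrix.vecMulVec ξ ξ)

/-- Reinterpret a plain vector in `ℝ³` as a point of Euclidean space. -/
noncomputable def toE3 (v : Fin 3 → ℝ) : EuclideanSpace ℝ (Fin 3) :=
  (WithLp.equiv 2 (Fin 3 → ℝ)).symm v

/-- Partial gradient of `F : (ℝ³)^N → ℝ` with respect to the velocity `v_p`. -/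
noncomputable def gradVp {N : ℕ} (F : (Fin N → EuclideanSpace ℝ (Fin 3)) → ℝ)
    (V : Fin N → EuclideanSpace ℝ (Fin 3)) (p : Fin N) : EuclideanSpace ℝ (Fin 3) :=
  gradient (fun ξ => F (Function.update V p ξ)) (V p)

/-- The `p`-th `ℝ³` block of the average discrete gradient
`∇̄F(Vⁿ,Vⁿ⁺¹) = ∫₀¹ ∇F((1−t)Vⁿ + t Vⁿ⁺¹) dt`. -/
noncomputable def bGrad {N : ℕ} (F : (Fin N → EuclideanSpace ℝ (Fin 3)) → ℝ)
    (V0 V1 : Fin N → EuclideanSpace ℝ (Fin 3)) (p : Fin N) : EuclideanSpace ℝ (Fin 3) :=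
  ∫ t in (0:ℝ)..1, gradVp F ((1 - t) • V0 + t • V1) p

/-- `Γ̄(F,p,p̄) = (1/(m w_p)) (∇̄F)_p − (1/(m w_p̄)) (∇̄F)_p̄`. -/
noncomputable def bGamma {N : ℕ} (m : ℝ) (w : Fin N → ℝ)
    (F : (Fin N → EuclideanSpace ℝ (Fin 3)) → ℝ)
    (V0 V1 : Fin N → EuclideanSpace ℝ (Fin 3)) (p q : Fin N) : EuclideanSpace ℝ (Fin 3) :=
  (1 / (m * w p)) • bGrad F V0 V1 p - (1 / (m * w q)) • bGrad F V0 V1 q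

/-- The kinetic energy `K(V) = ½ Σ_p m w_p ‖v_p‖²`. -/
noncomputable def kinE {N : ℕ} (m : ℝ) (w : Fin N → ℝ)
    (V : Fin N → EuclideanSpace ℝ (Fin 3)) : ℝ :=
  (1 / 2) * ∑ p, m * w p * ‖V p‖ ^ 2

/-- The discrete-gradient-dependent integrator (DGDI) update:
`v_pⁿ⁺¹ = v_pⁿ + Δt (ν/m) Σ_p̄ w_p̄ 𝟙(p,p̄) Q(Γ̄(K,p,p̄)) Γ̄(S,p,p̄)` for every `p`. -/
def DGDIUpdate {N : ℕ} (m ν Δt : ℝ) (w : Fin N → ℝ) (ind : Fin N → Fin N → ℝ)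
    (S : (Fin N → EuclideanSpace ℝ (Fin 3)) → ℝ)
    (V0 V1 : Fin N → EuclideanSpace ℝ (Fin 3)) : Prop :=
  ∀ p, V1 p = V0 p + (Δt * (ν / m)) •
    ∑ q, (w q * ind p q) •
      toE3 ((landauQ (bGamma m w (kinE m w) V0 V1 p q)).mulVec (bGamma m w S V0 V1 p q))

lemma gradVp_eq_toDual {N : ℕ} (F : (Fin N → EuclideanSpace ℝ (Fin 3)) → ℝ)
    (hF : ContDiff ℝ 1 F) (V : Fin N → EuclideanSpace ℝ (Fin 3)) (p : Fin N) :
    gradVp F V p = (InnerProductSpace.toDual ℝ (EuclideanSpace ℝ (Fin 3))).symm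
      ((fderiv ℝ F V).comp (ContinuousLinearMap.pi
        (Pi.single p (ContinuousLinearMap.id ℝ (EuclideanSpace ℝ (Fin 3)))))) := by
  have hU := hasFDerivAt_update (𝕜 := ℝ) (i := p) V (V p)
  have hFd : HasFDerivAt F (fderiv ℝ F V) (Function.update V p (V p)) := by
    rw [Function.update_eq_self]
    exact (hF.differentiable one_ne_zero V).hasFDerivAt
  have h1 := hFd.comp (V p) hU
  unfold gradVp gradient
  congr 1
  exact h1.fderiv

lemma inner_gradVp {N : ℕ} (F : (Fin N → EuclideanSpace ℝ (Fin 3)) → ℝ)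
    (hF : ContDiff ℝ 1 F) (V : Fin N → EuclideanSpace ℝ (Fin 3)) (p : Fin N)
    (u : EuclideanSpace ℝ (Fin 3)) :
    ⟪gradVp F V p, u⟫ = fderiv ℝ F V (Pi.single p u) := by
  rw [gradVp_eq_toDual F hF, InnerProductSpace.toDual_symm_apply]
  simp only [ContinuousLinearMap.coe_comp', Function.comp_apply]
  congr 1
  funext q
  by_cases h : q = p <;> simp [h, ContinuousLinearMap.pi_apply, Pi.single_apply]

lemma fderiv_eq_sum_inner {N : ℕ} (F : (Fin N → EuclideanSpace ℝ (Fin 3)) → ℝ)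
    (hF : ContDiff ℝ 1 F) (V d : Fin N → EuclideanSpace ℝ (Fin 3)) :
    fderiv ℝ F V d = ∑ p, ⟪gradVp F V p, d p⟫ := by
  conv_lhs => rw [← Finset.univ_sum_single d]
  rw [map_sum]
  exact Finset.sum_congr rfl fun p _ => (inner_gradVp F hF V p (d p)).symm

lemma continuous_gradVp {N : ℕ} (F : (Fin N → EuclideanSpace ℝ (Fin 3)) → ℝ)
    (hF : ContDiff ℝ 1 F) (p : Fin N) {X : Type*} [TopologicalSpace X]
    {γ : X → Fin N → EuclideanSpace ℝ (Fin 3)} (hγ : Continuous γ) :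
    Continuous fun t => gradVp F (γ t) p := by
  have h : (fun t => gradVp F (γ t) p) = fun t =>
      (InnerProductSpace.toDual ℝ (EuclideanSpace ℝ (Fin 3))).symm
      ((fderiv ℝ F (γ t)).comp (ContinuousLinearMap.pi
        (Pi.single p (ContinuousLinearMap.id ℝ (EuclideanSpace ℝ (Fin 3)))))) := by
    funext t; exact gradVp_eq_toDual F hF (γ t) p
  rw [h]
  exact (InnerProductSpace.toDual ℝ _).symm.continuous.comp
    ((((hF.continuous_fderiv one_ne_zero).comp hγ).clm_comp continuous_const))

lemma discrete_chain {N : ℕ} (F : (Fin N → EuclideanSpace ℝ (Fin 3)) → ℝ)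
    (hF : ContDiff ℝ 1 F) (V0 V1 : Fin N → EuclideanSpace ℝ (Fin 3)) :
    F V1 - F V0 = ∑ p, ⟪bGrad F V0 V1 p, V1 p - V0 p⟫ := by
  set d : Fin N → EuclideanSpace ℝ (Fin 3) := V1 - V0 with hd
  set γ : ℝ → Fin N → EuclideanSpace ℝ (Fin 3) := fun t => V0 + t • d with hγdef
  have hcomb : ∀ t : ℝ, (1 - t) • V0 + t • V1 = γ t := by
    intro t
    simp only [hγdef, hd, smul_sub, sub_smul, one_smul]
    abel
  have hγc : Continuous γ := by
    apply continuous_const.add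
    exact (continuous_id.smul continuous_const)
  have hdd : ∀ t : ℝ, HasDerivAt γ d t := by
    intro t
    simpa [hγdef] using ((hasDerivAt_id t).smul_const d).const_add V0
  have hder : ∀ t : ℝ, HasDerivAt (fun s => F (γ s)) ((fderiv ℝ F (γ t)) d) t := fun t =>
    (hF.differentiable one_ne_zero (γ t)).hasFDerivAt.comp_hasDerivAt t (hdd t)
  have hcont : Continuous fun t => (fderiv ℝ F (γ t)) d :=
    ((hF.continuous_fderiv one_ne_zero).comp hγc).clm_apply continuous_const
  have hFTC := intervalIntegral.integral_eq_sub_of_hasDerivAt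
    (f := fun s => F (γ s)) (f' := fun t => (fderiv ℝ F (γ t)) d)
    (a := 0) (b := 1) (fun t _ => hder t) (hcont.intervalIntegrable 0 1)
  have hγ0 : γ 0 = V0 := by simp [hγdef]
  have hγ1 : γ 1 = V1 := by simp [hγdef, hd]
  rw [hγ0, hγ1] at hFTC
  rw [← hFTC]
  have hint : ∀ p : Fin N, IntervalIntegrable (fun t => gradVp F (γ t) p)
      MeasureTheory.volume 0 1 :=
    fun p => (continuous_gradVp F hF p hγc).intervalIntegrable 0 1
  calc ∫ t in (0:ℝ)..1, (fderiv ℝ F (γ t)) d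
      = ∫ t in (0:ℝ)..1, ∑ p, ⟪gradVp F (γ t) p, d p⟫ := by
        congr 1; funext t; exact fderiv_eq_sum_inner F hF (γ t) d
    _ = ∑ p, ∫ t in (0:ℝ)..1, ⟪gradVp F (γ t) p, d p⟫ := by
        apply intervalIntegral.integral_finset_sum
        intro p _
        exact (((continuous_gradVp F hF p hγc).inner continuous_const)).intervalIntegrable 0 1
    _ = ∑ p, ⟪bGrad F V0 V1 p, V1 p - V0 p⟫ := by
        refine Finset.sum_congr rfl fun p _ => ?_
        have hci : ∀ t : ℝ, ⟪gradVp F (γ t) p, d p⟫ = ⟪d p, gradVp F (γ t) p⟫ :=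
          fun t => real_inner_comm _ _
        simp_rw [hci]
        have hcomm := (innerSL ℝ (d p)).intervalIntegral_comp_comm (hint p)
        simp only [innerSL_apply_apply] at hcomm
        rw [hcomm, real_inner_comm]
        congr 1
        unfold bGrad
        congr 1
        funext t
        rw [hcomb t]

lemma landauQ_neg (ξ : EuclideanSpace ℝ (Fin 3)) : landauQ (-ξ) = landauQ ξ := by
  unfold landauQ
  rw [norm_neg]
  congr 2
  ext i j
  simp [Matrix.vecMulVec_apply]

lemma inner_toE3 (x : EuclideanSpace ℝ (Fin 3)) (v : Fin 3 → ℝ) :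
    ⟪x, toE3 v⟫ = dotProduct (x : Fin 3 → ℝ) v := by
  simp [toE3, PiLp.inner_apply, RCLike.inner_apply, dotProduct]
  exact Finset.sum_congr rfl fun i _ => mul_comm _ _

lemma bGamma_antisymm {N : ℕ} (m : ℝ) (w : Fin N → ℝ)
    (G : (Fin N → EuclideanSpace ℝ (Fin 3)) → ℝ)
    (V0 V1 : Fin N → EuclideanSpace ℝ (Fin 3)) (p q : Fin N) :
    bGamma m w G V0 V1 q p = - bGamma m w G V0 V1 p q := by
  unfold bGamma; abel

/-- Discrete chain rule for the discrete-gradient-dependent integrator: under the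
DGDI update, for every `C¹` function `F`,
`F(Vⁿ⁺¹) − F(Vⁿ) = Δt ½ Σ_{p,p̄} Γ̄(F,p,p̄)ᵀ W̄(p,p̄) Γ̄(S,p,p̄)` where
`W̄(p,p̄) = ν w_p w_p̄ 𝟙(p,p̄) Q(Γ̄(K,p,p̄))`. -/
theorem DGDI_discrete_chain_rule
(N : ℕ) (hN : 1 ≤ N) (m : ℝ) (hm : 0 < m)
    (w : Fin N → ℝ) (hw : ∀ p, 0 < w p) (ν : ℝ) (hν : 0 ≤ ν) (Δt : ℝ) (hΔt : 0 ≤ Δt)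
    (ind : Fin N → Fin N → ℝ) (hind01 : ∀ p q, ind p q = 0 ∨ ind p q = 1)
    (hindsymm : ∀ p q, ind p q = ind q p) (hinddiag : ∀ p, ind p p = 0)
    (S : (Fin N → EuclideanSpace ℝ (Fin 3)) → ℝ) (hS : ContDiff ℝ 1 S)
    (V0 V1 : Fin N → EuclideanSpace ℝ (Fin 3))
    (hK : ∀ p q, ind p q = 1 → bGamma m w (kinE m w) V0 V1 p q ≠ 0)
    (hupd : DGDIUpdate m ν Δt w ind S V0 V1)
    (F : (Fin N → EuclideanSpace ℝ (Fin 3)) → ℝ) (hF : ContDiff ℝ 1 F) :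
    F V1 - F V0 = Δt * ((1 / 2) * ∑ p, ∑ q, (ν * w p * w q * ind p q) *
      (bGamma m w F V0 V1 p q ⬝ᵥ
        (landauQ (bGamma m w (kinE m w) V0 V1 p q)).mulVec (bGamma m w S V0 V1 p q))) := by
  have key := discrete_chain F hF V0 V1
  set M : Fin N → Fin N → (Fin 3 → ℝ) := fun p q =>
    (landauQ (bGamma m w (kinE m w) V0 V1 p q)).mulVec (bGamma m w S V0 V1 p q) with hM
  set a : Fin N → EuclideanSpace ℝ (Fin 3) := bGrad F V0 V1 with ha
  set T : Fin N → Fin N → ℝ := fun p q => dotProduct (a p : Fin 3 → ℝ) (M p q) with hT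
  -- skew-symmetry of M
  have hMskew : ∀ p q, M q p = - M p q := by
    intro p q
    rw [hM]
    simp only
    rw [bGamma_antisymm m w (kinE m w) V0 V1 p q, bGamma_antisymm m w S V0 V1 p q, landauQ_neg]
    funext i
    simp [Matrix.mulVec, dotProduct, mul_neg, Finset.sum_neg_distrib]
  -- expansion of the LHS
  have hLHS : ∀ p, ⟪a p, V1 p - V0 p⟫
      = ∑ q, (Δt * (ν / m)) * ((w q * ind p q) * T p q) := by
    intro p
    have h1 : V1 p - V0 p = (Δt * (ν / m)) • ∑ q, (w q * ind p q) • toE3 (M p q) := by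
      rw [hupd p, add_sub_cancel_left]
    rw [h1, inner_smul_right, inner_sum, Finset.mul_sum]
    refine Finset.sum_congr rfl fun q _ => ?_
    rw [inner_smul_right, inner_toE3]
  -- splitting bGamma F in the dot product
  have hdot : ∀ p q, dotProduct (bGamma m w F V0 V1 p q : Fin 3 → ℝ) (M p q)
      = (1 / (m * w p)) * T p q
        - (1 / (m * w q)) * dotProduct (a q : Fin 3 → ℝ) (M p q) := by
    intro p q
    rw [hT]
    simp only [bGamma, ha]
    simp [dotProduct, Finset.mul_sum, sub_mul, Finset.sum_sub_distrib, mul_assoc]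
  -- symmetrization
  have hswap : ∑ p, ∑ q, (ν * w p * w q * ind p q) *
        ((1 / (m * w q)) * dotProduct (a q : Fin 3 → ℝ) (M p q))
      = - ∑ p, ∑ q, (ν * w p * w q * ind p q) * ((1 / (m * w p)) * T p q) := by
    rw [Finset.sum_comm]
    rw [← Finset.sum_neg_distrib]
    refine Finset.sum_congr rfl fun p _ => ?_
    rw [← Finset.sum_neg_distrib]
    refine Finset.sum_congr rfl fun q _ => ?_
    rw [hMskew p q, hindsymm p q]
    have : dotProduct (a p : Fin 3 → ℝ) (- M p q) = - T p q := by
      rw [hT]; simp [dotProduct_neg]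
    rw [this]
    ring
  rw [key]
  simp_rw [hLHS]
  have hRHS : ∑ p, ∑ q, (ν * w p * w q * ind p q) *
        dotProduct (bGamma m w F V0 V1 p q : Fin 3 → ℝ) (M p q)
      = 2 * ∑ p, ∑ q, (ν * w p * w q * ind p q) * ((1 / (m * w p)) * T p q) := by
    simp_rw [hdot, mul_sub, Finset.sum_sub_distrib]
    rw [hswap]
    ring
  rw [hRHS]
  have hhalf : Δt * ((1:ℝ) / 2 * (2 * ∑ p, ∑ q, (ν * w p * w q * ind p q) * ((1 / (m * w p)) * T p q)))
      = Δt * ∑ p, ∑ q, (ν * w p * w q * ind p q) * ((1 / (m * w p)) * T p q) := by ring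
  rw [hhalf, Finset.mul_sum]
  refine Finset.sum_congr rfl fun p _ => ?_
  rw [Finset.mul_sum]
  refine Finset.sum_congr rfl fun q _ => ?_
  have hwp := (hw p).ne'
  have hm' := hm.ne'
  field_simp
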